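/- arXiv:math/0402093 — 5 statements merged into one kernel-verified Lean document; each statement's English description precedes it below -/
import Mathlib

section
/- Let 0 < q < 1 and define \zeta[s] := \sum_{k=1}^\infty q^{(s-1)k}/[k]_q^s and \zeta[s_1,s_2] := \sum_{k_1 > k_2 > 0} q^{(s_1-1)k_1} q^{(s_2-1)k_2}/([k_1]_q^{s_1} [k_2]_q^{s_2}). Then for s > 1 one has \zeta[s]^2 = 2\zeta[s,s] + (1-q)\zeta[2s-1] + \zeta[2s]. -/
noncomputable def qnum (q : ℝ) (k : ℕ) : ℝ := (1 - q ^ k) / (1 - q)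

noncomputable def qzeta (q s : ℝ) : ℝ :=
  ∑' k : ℕ+, q ^ ((s - 1) * ((k : ℕ) : ℝ)) / (qnum q k) ^ s

noncomputable def qzeta2 (q s₁ s₂ : ℝ) : ℝ :=
  ∑' p : {p : ℕ × ℕ // p.2 < p.1 ∧ 0 < p.2},
    q ^ ((s₁ - 1) * (p.1.1 : ℝ)) * q ^ ((s₂ - 1) * (p.1.2 : ℝ)) /
      ((qnum q p.1.1) ^ s₁ * (qnum q p.1.2) ^ s₂)

namespace QStuffle

noncomputable def F (q s : ℝ) (k : ℕ+) : ℝ :=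
  q ^ ((s - 1) * ((k : ℕ) : ℝ)) / (qnum q k) ^ s

lemma one_le_qnum {q : ℝ} (hq0 : 0 < q) (hq1 : q < 1) {k : ℕ} (hk : 0 < k) :
    1 ≤ qnum q k := by
  rw [qnum, le_div_iff₀ (by linarith)]
  have : q ^ k ≤ q ^ 1 := pow_le_pow_of_le_one hq0.le hq1.le hk
  simp only [pow_one] at this
  linarith

lemma qnum_pos {q : ℝ} (hq0 : 0 < q) (hq1 : q < 1) {k : ℕ} (hk : 0 < k) :
    0 < qnum q k :=
  lt_of_lt_of_le one_pos (one_le_qnum hq0 hq1 hk)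

lemma F_nonneg' {q s : ℝ} (hq0 : 0 < q) (hq1 : q < 1) (k : ℕ+) : 0 ≤ F q s k :=
  div_nonneg (Real.rpow_nonneg hq0.le _)
    (Real.rpow_nonneg (qnum_pos hq0 hq1 k.2).le _)

lemma summable_F {q s : ℝ} (hq0 : 0 < q) (hq1 : q < 1) (hs : 1 < s) :
    Summable (F q s) := by
  have hr0 : (0:ℝ) ≤ q ^ (s - 1) := Real.rpow_nonneg hq0.le _
  have hr1 : q ^ (s - 1) < 1 := Real.rpow_lt_one hq0.le hq1 (by linarith)
  have hgeom : Summable (fun n : ℕ => (q ^ (s - 1)) ^ n) :=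
    summable_geometric_of_lt_one hr0 hr1
  refine Summable.of_nonneg_of_le (fun k => F_nonneg' hq0 hq1 k)
    (fun k => ?_) (hgeom.comp_injective (fun a b h => PNat.coe_injective h))
  show F q s k ≤ (q ^ (s - 1)) ^ ((k : ℕ))
  have h1 : (1:ℝ) ≤ (qnum q (k : ℕ)) ^ s :=
    Real.one_le_rpow (one_le_qnum hq0 hq1 k.2) (by linarith)
  calc F q s k ≤ q ^ ((s - 1) * ((k : ℕ) : ℝ)) :=
        div_le_self (Real.rpow_nonneg hq0.le _) h1
    _ = (q ^ (s - 1)) ^ ((k : ℕ)) := by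
        rw [Real.rpow_mul hq0.le, Real.rpow_natCast]

def diagEquiv : ℕ+ ≃ ↥{p : ℕ+ × ℕ+ | p.1 = p.2} where
  toFun k := ⟨(k, k), rfl⟩
  invFun p := p.1.1
  left_inv k := rfl
  right_inv := by rintro ⟨⟨a, b⟩, h⟩; simp only [Set.mem_setOf_eq] at h; subst h; rfl

def swapEquiv : ↥{p : ℕ+ × ℕ+ | p.1 < p.2} ≃ ↥{p : ℕ+ × ℕ+ | p.2 < p.1} where
  toFun p := ⟨(p.1.2, p.1.1), p.2⟩
  invFun p := ⟨(p.1.2, p.1.1), p.2⟩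
  left_inv := by rintro ⟨⟨a, b⟩, h⟩; rfl
  right_inv := by rintro ⟨⟨a, b⟩, h⟩; rfl

def AEquiv : ↥{p : ℕ+ × ℕ+ | p.2 < p.1} ≃ {p : ℕ × ℕ // p.2 < p.1 ∧ 0 < p.2} where
  toFun p := ⟨((p.1.1 : ℕ), (p.1.2 : ℕ)), ⟨by exact_mod_cast p.2, p.1.2.2⟩⟩
  invFun p := ⟨(⟨p.1.1, p.2.2.trans p.2.1⟩, ⟨p.1.2, p.2.2⟩), p.2.1⟩
  left_inv := by rintro ⟨⟨⟨a, ha⟩, ⟨b, hb⟩⟩, h⟩; rfl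
  right_inv := by rintro ⟨⟨a, b⟩, h⟩; rfl

lemma diag_term {q s : ℝ} (hq0 : 0 < q) (hq1 : q < 1) (hs : 1 < s) (k : ℕ+) :
    F q s k * F q s k
      = (1 - q) * (q ^ ((2 * s - 1 - 1) * ((k : ℕ) : ℝ)) / (qnum q k) ^ (2 * s - 1))
        + q ^ ((2 * s - 1) * ((k : ℕ) : ℝ)) / (qnum q k) ^ (2 * s) := by
  have hN : 0 < qnum q (k : ℕ) := qnum_pos hq0 hq1 k.2
  have hNs : (0:ℝ) < (qnum q (k : ℕ)) ^ (2 * s - 1) := Real.rpow_pos_of_pos hN _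
  have h1q : (1 - q) * qnum q (k : ℕ) = 1 - q ^ (k : ℕ) := by
    have hq : (1:ℝ) - q ≠ 0 := by linarith
    rw [qnum]
    field_simp
  have hpow : (qnum q (k : ℕ)) ^ (2 * s) = (qnum q (k : ℕ)) ^ (2 * s - 1) * qnum q (k : ℕ) := by
    rw [← Real.rpow_add_one hN.ne' (2 * s - 1)]; ring_nf
  have hFF : F q s k * F q s k
      = q ^ ((2 * s - 1 - 1) * ((k : ℕ) : ℝ)) / (qnum q k) ^ (2 * s) := by
    rw [F, div_mul_div_comm, ← Real.rpow_add hq0, ← Real.rpow_add hN]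
    ring_nf
  have hB : q ^ ((2 * s - 1) * ((k : ℕ) : ℝ))
      = q ^ ((2 * s - 1 - 1) * ((k : ℕ) : ℝ)) * q ^ (k : ℕ) := by
    rw [← Real.rpow_natCast q (k : ℕ), ← Real.rpow_add hq0]
    ring_nf
  rw [hFF, hB, hpow, ← mul_div_assoc,
    div_add_div _ _ (ne_of_gt hNs) (ne_of_gt (mul_pos hNs hN)),
    div_eq_div_iff (ne_of_gt (mul_pos hNs hN))
      (ne_of_gt (mul_pos hNs (mul_pos hNs hN)))]
  linear_combination (-(q ^ ((2 * s - 1 - 1) * ((k : ℕ) : ℝ)) * (qnum q (k : ℕ)) ^ (2 * s - 1)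
    * (qnum q (k : ℕ)) ^ (2 * s - 1) * qnum q (k : ℕ))) * h1q

end QStuffle

open QStuffle in
theorem qzeta_sq_stuffle (q s : ℝ) (hq0 : 0 < q) (hq1 : q < 1) (hs : 1 < s) :
    (qzeta q s) ^ 2
      = 2 * qzeta2 q s s + (1 - q) * qzeta q (2 * s - 1) + qzeta q (2 * s) := by
  have hf : Summable (F q s) := summable_F hq0 hq1 hs
  have hf0 : ∀ k, 0 ≤ F q s k := F_nonneg' hq0 hq1
  have hfn : Summable (fun k => ‖F q s k‖) := by
    refine hf.congr fun k => ?_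
    rw [Real.norm_eq_abs, abs_of_nonneg (hf0 k)]
  set h : ℕ+ × ℕ+ → ℝ := fun p => F q s p.1 * F q s p.2 with hh_def
  have hh : Summable h := summable_mul_of_summable_norm hfn hfn
  have hsq : (qzeta q s) ^ 2 = ∑' p : ℕ+ × ℕ+, h p := by
    rw [pow_two]
    exact tsum_mul_tsum_of_summable_norm hfn hfn
  have hsplit : ∑' p : ℕ+ × ℕ+, h p
      = (∑' p, ({p : ℕ+ × ℕ+ | p.2 < p.1}).indicator h p)
        + (∑' p, ({p : ℕ+ × ℕ+ | p.1 < p.2}).indicator h p)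
        + ∑' p, ({p : ℕ+ × ℕ+ | p.1 = p.2}).indicator h p := by
    rw [← Summable.tsum_add (hh.indicator _) (hh.indicator _),
      ← Summable.tsum_add ((hh.indicator _).add (hh.indicator _)) (hh.indicator _)]
    refine tsum_congr fun p => ?_
    rcases lt_trichotomy p.1 p.2 with hlt | heq | hgt
    · rw [Set.indicator_of_notMem (by simp [not_lt, hlt.le]),
        Set.indicator_of_mem (by exact hlt), Set.indicator_of_notMem (by simp [hlt.ne])]
      simp
    · rw [Set.indicator_of_notMem (by simp [not_lt, heq.le]),
        Set.indicator_of_notMem (by simp [not_lt, heq.ge]),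
        Set.indicator_of_mem (by exact heq)]
      simp
    · rw [Set.indicator_of_mem (by exact hgt),
        Set.indicator_of_notMem (by simp [not_lt, hgt.le]),
        Set.indicator_of_notMem (by simp [hgt.ne'])]
      simp
  have hAsum : ∑' p, ({p : ℕ+ × ℕ+ | p.2 < p.1}).indicator h p = qzeta2 q s s := by
    rw [← tsum_subtype {p : ℕ+ × ℕ+ | p.2 < p.1} h, qzeta2, ← AEquiv.tsum_eq]
    refine tsum_congr fun p => ?_
    rcases p with ⟨⟨a, b⟩, hab⟩
    show F q s a * F q s b = _
    rw [F, F, div_mul_div_comm]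
    rfl
  have hBsum : ∑' p, ({p : ℕ+ × ℕ+ | p.1 < p.2}).indicator h p = qzeta2 q s s := by
    rw [← tsum_subtype {p : ℕ+ × ℕ+ | p.1 < p.2} h, ← hAsum,
      ← tsum_subtype {p : ℕ+ × ℕ+ | p.2 < p.1} h, ← swapEquiv.tsum_eq]
    exact tsum_congr fun p => mul_comm _ _
  have hDsum : ∑' p, ({p : ℕ+ × ℕ+ | p.1 = p.2}).indicator h p
      = (1 - q) * qzeta q (2 * s - 1) + qzeta q (2 * s) := by
    rw [← tsum_subtype {p : ℕ+ × ℕ+ | p.1 = p.2} h, ← diagEquiv.tsum_eq]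
    calc ∑' k : ℕ+, h ((diagEquiv k) : ℕ+ × ℕ+)
        = ∑' k : ℕ+, ((1 - q) * (q ^ ((2 * s - 1 - 1) * ((k : ℕ) : ℝ)) / (qnum q k) ^ (2 * s - 1))
            + q ^ ((2 * s - 1) * ((k : ℕ) : ℝ)) / (qnum q k) ^ (2 * s)) :=
          tsum_congr fun k => diag_term hq0 hq1 hs k
      _ = ∑' k : ℕ+, ((1 - q) * F q (2 * s - 1) k + F q (2 * s) k) := rfl
      _ = (1 - q) * qzeta q (2 * s - 1) + qzeta q (2 * s) := by
          rw [Summable.tsum_add ((summable_F hq0 hq1 (by linarith : (1:ℝ) < 2 * s - 1)).mul_left (1 - q))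
            (summable_F hq0 hq1 (by linarith : (1:ℝ) < 2 * s)), tsum_mul_left]
          rfl
  rw [hsq, hsplit, hAsum, hBsum, hDsum]
  ring
end

section
/- Let 0 < q < 1, s > 1 real, and let \zeta[\{s\}^n] denote the multiple q-zeta value with n equal arguments s. Then for every positive integer n, n\,\zeta[\{s\}^n] = \sum_{k=1}^n (-1)^{k+1} \zeta[\{s\}^{n-k}] \sum_{j=0}^{k-1} \binom{k-1}{j} (1-q)^j \zeta[ks - j]. -/
noncomputable def qzetaRep (q s : ℝ) (n : ℕ) : ℝ :=
  ∑' k : {f : Fin n → ℕ // StrictAnti f ∧ ∀ i, 0 < f i},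
    ∏ i, q ^ ((s - 1) * ((k.1 i : ℕ) : ℝ)) / (qnum q (k.1 i)) ^ s

/-!
Write `x i = q ^ ((s - 1) i) / [i]_q ^ s` for the summand of `ζ[s]`. Then `ζ[{s}^n]` is the
`n`-th elementary symmetric function `e n` of the summable family `x`, and the inner sum over `j`
is the power sum `p k = ∑ x i ^ k`: writing `x i = c ^ s / q ^ i` with `c = q ^ i / [i]_q`, the
binomial theorem collapses `∑ j, (k-1).choose j (1 - q) ^ j c ^ (k s - j) / q ^ i` to `x i ^ k`,
because `(1 - q) / c + 1 = q ^ (-i)`. The recurrence is therefore Newton's identity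
`n e n = ∑ k, (-1) ^ (k + 1) e (n - k) p k`, which passes from finite subfamilies to the whole
family because all the series involved converge absolutely.
-/

open Finset Filter Topology

theorem MvPolynomial.aeval_esymm_subtype {ι R : Type*} [CommRing R] (T : Finset ι) (x : ι → R)
    (m : ℕ) :
    aeval (fun i : T => x i) (esymm T R m) = ∑ t ∈ T.powersetCard m, ∏ i ∈ t, x i := by
  rw [aeval_esymm_eq_multiset_esymm, univ_eq_attach, attach_val]
  exact congrArg (Multiset.esymm · m) (Multiset.attach_map_val' T.val x) |>.trans
    (esymm_map_val x T m)

theorem MvPolynomial.aeval_psum_subtype {ι R : Type*} [CommRing R] (T : Finset ι) (x : ι → R)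
    (m : ℕ) : aeval (fun i : T => x i) (psum T R m) = ∑ i ∈ T, x i ^ m := by
  simp [psum, sum_attach T fun i => x i ^ m]

theorem Finset.mul_sum_powersetCard_prod {ι R : Type*} [CommRing R] (T : Finset ι) (x : ι → R)
    (n : ℕ) :
    n * ∑ t ∈ T.powersetCard n, ∏ i ∈ t, x i
      = ∑ k ∈ Icc 1 n, (-1) ^ (k + 1) * (∑ t ∈ T.powersetCard (n - k), ∏ i ∈ t, x i) *
          ∑ i ∈ T, x i ^ k := by
  classical
  have newton := congrArg (MvPolynomial.aeval fun i : T => x i)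
    (MvPolynomial.mul_esymm_eq_sum T R n)
  simp only [map_mul, map_natCast, map_pow, map_neg, map_one, map_sum,
    MvPolynomial.aeval_esymm_subtype, MvPolynomial.aeval_psum_subtype] at newton
  rw [newton, mul_sum]
  refine (sum_nbij' (fun k => (n - k, k)) Prod.snd (fun k hk => ?_) (fun a ha => ?_)
    (fun _ _ => rfl) (fun a ha => ?_) fun k hk => ?_).symm
  · simp only [mem_Icc, mem_filter, HasAntidiagonal.mem_antidiagonal] at hk ⊢
    omega
  · simp only [mem_Icc, mem_filter, HasAntidiagonal.mem_antidiagonal] at ha ⊢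
    omega
  · simp only [mem_filter, HasAntidiagonal.mem_antidiagonal] at ha
    ext <;> simp only; omega
  · obtain ⟨m, rfl⟩ : ∃ m, n = m + k := ⟨n - k, by simp only [mem_Icc] at hk; omega⟩
    have sign : (-1 : R) ^ (m + k + 1) * (-1) ^ m = (-1) ^ (k + 1) := by
      rw [← pow_add, show m + k + 1 + m = 2 * m + (k + 1) by ring, pow_add, pow_mul, neg_one_sq,
        one_pow, one_mul]
    simp only [Nat.add_sub_cancel, ← sign, mul_assoc]

section InfiniteNewton

variable {ι : Type*} {x : ι → ℝ}

theorem Summable.pow (hx : Summable x) {k : ℕ} (hk : k ≠ 0) : Summable fun i => x i ^ k := by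
  refine hx.abs.of_norm_bounded_eventually ?_
  filter_upwards [hx.tendsto_cofinite_zero.eventually (Icc_mem_nhds neg_one_lt_zero one_pos)]
    with i hi
  rw [norm_pow, Real.norm_eq_abs]
  exact pow_le_of_le_one (abs_nonneg _) (abs_le.2 hi) hk

theorem Summable.finsetProd (hx : Summable x) : Summable fun s : Finset ι => ∏ i ∈ s, x i :=
  (summable_finsetProd_of_summable_nonneg (fun i => abs_nonneg (x i)) hx.abs).of_norm_bounded
    fun s => by rw [Real.norm_eq_abs, abs_prod]

noncomputable def tsumEsymm (x : ι → ℝ) (n : ℕ) : ℝ :=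
  ∑' s : Set.powersetCard ι n, ∏ i ∈ (s : Finset ι), x i

theorem tendsto_sum_powersetCard_prod (hx : Summable x) (n : ℕ) :
    Tendsto (fun T : Finset ι => ∑ t ∈ T.powersetCard n, ∏ i ∈ t, x i) atTop
      (𝓝 (tsumEsymm x n)) := by
  classical
  have hasSum : HasSum ((Set.powersetCard ι n).indicator fun t => ∏ i ∈ t, x i)
      (tsumEsymm x n) := by
    rw [tsumEsymm, _root_.tsum_subtype (Set.powersetCard ι n) fun t => ∏ i ∈ t, x i]
    exact (hx.finsetProd.indicator _).hasSum
  have tendsto_powerset : Tendsto (powerset : Finset ι → Finset (Finset ι)) atTop atTop :=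
    tendsto_atTop_finset_of_monotone (fun _ _ => powerset_mono.2) fun t => ⟨t, mem_powerset_self t⟩
  refine (hasSum.comp tendsto_powerset).congr fun T => ?_
  simp [Set.indicator_apply, powersetCard_eq_filter, sum_filter]

theorem mul_tsumEsymm (hx : Summable x) (n : ℕ) :
    n * tsumEsymm x n
      = ∑ k ∈ Icc 1 n, (-1) ^ (k + 1) * tsumEsymm x (n - k) * ∑' i, x i ^ k :=
  tendsto_nhds_unique
    (((tendsto_sum_powersetCard_prod hx n).const_mul _).congr fun T =>
      T.mul_sum_powersetCard_prod x n)
    (tendsto_finsetSum _ fun k hk =>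
      ((tendsto_sum_powersetCard_prod hx (n - k)).const_mul _).mul
        (hx.pow (Nat.one_le_iff_ne_zero.1 (mem_Icc.1 hk).1)).hasSum)

theorem tsumEsymm_eq_tsum_orderEmbedding [LinearOrder ι] (x : ι → ℝ) (n : ℕ) :
    tsumEsymm x n = ∑' e : Fin n ↪o ι, ∏ i, x (e i) := by
  rw [tsumEsymm, ← Set.powersetCard.ofFinEmbEquiv.tsum_eq]
  refine tsum_congr fun e => ?_
  rw [Set.powersetCard.ofFinEmbEquiv_apply, Set.powersetCard.val_ofFinEmb, prod_map]
  rfl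

end InfiniteNewton

theorem sum_choose_mul_mul_rpow_sub {a c : ℝ} (hc : 0 < c) (r : ℝ) (m : ℕ) :
    ∑ j ∈ range (m + 1), (m.choose j : ℝ) * a ^ j * c ^ (r - j) = c ^ r * (a / c + 1) ^ m := by
  rw [add_pow, mul_sum]
  refine sum_congr rfl fun j _ => ?_
  rw [Real.rpow_sub hc, Real.rpow_natCast, one_pow, mul_one, div_pow]
  field_simp

section QZeta

variable {q t : ℝ} {i : ℕ}

theorem one_sub_mul_qnum (q : ℝ) (i : ℕ) : (1 - q) * qnum q i = 1 - q ^ i := by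
  rcases eq_or_ne q 1 with rfl | hq
  · simp [qnum]
  · exact mul_div_cancel₀ _ (sub_ne_zero.2 hq.symm)

theorem one_le_qnum (hq0 : 0 ≤ q) (hq1 : q < 1) (hi : i ≠ 0) : 1 ≤ qnum q i := by
  rw [qnum, le_div_iff₀ (sub_pos.2 hq1), one_mul]
  linarith [pow_le_of_le_one hq0 hq1.le hi]

-- The summand of `qzeta`, so that `qzeta q t = ∑' i : ℕ+, qzetaTerm q t i` holds by `rfl`.
noncomputable def qzetaTerm (q t : ℝ) (i : ℕ) : ℝ := q ^ ((t - 1) * (i : ℝ)) / qnum q i ^ t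

theorem qzetaTerm_nonneg (hq0 : 0 < q) (hq1 : q < 1) (i : ℕ+) : 0 ≤ qzetaTerm q t i :=
  div_nonneg (Real.rpow_nonneg hq0.le _)
    (Real.rpow_nonneg (zero_le_one.trans (one_le_qnum hq0.le hq1 i.ne_zero)) _)

theorem qzetaTerm_le_geometric (hq0 : 0 < q) (hq1 : q < 1) (ht : 1 ≤ t) (i : ℕ+) :
    qzetaTerm q t i ≤ (q ^ (t - 1)) ^ (i : ℕ) := by
  rw [qzetaTerm, ← Real.rpow_natCast, ← Real.rpow_mul hq0.le]
  exact div_le_self (Real.rpow_nonneg hq0.le _)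
    (Real.one_le_rpow (one_le_qnum hq0.le hq1 i.ne_zero) (by linarith))

theorem summable_qzetaTerm (hq0 : 0 < q) (hq1 : q < 1) (ht : 1 < t) :
    Summable fun i : ℕ+ => qzetaTerm q t i :=
  .of_nonneg_of_le (qzetaTerm_nonneg hq0 hq1) (qzetaTerm_le_geometric hq0 hq1 ht.le)
    ((summable_geometric_of_lt_one (Real.rpow_nonneg hq0.le _)
      (Real.rpow_lt_one hq0.le hq1 (sub_pos.2 ht))).comp_injective PNat.coe_injective)

theorem qzetaTerm_eq_rpow_div (hq0 : 0 < q) (hb : 0 < qnum q i) :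
    qzetaTerm q t i = (q ^ i / qnum q i) ^ t / q ^ i := by
  rw [qzetaTerm, Real.div_rpow (by positivity) hb.le, mul_comm, Real.rpow_mul hq0.le,
    Real.rpow_natCast, Real.rpow_sub_one (by positivity), div_right_comm]

theorem sum_choose_mul_qzetaTerm (hq0 : 0 < q) (hb : 0 < qnum q i) (s : ℝ) (m : ℕ) :
    ∑ j ∈ range (m + 1), (m.choose j : ℝ) * (1 - q) ^ j * qzetaTerm q ((m + 1 : ℕ) * s - j) i
      = qzetaTerm q s i ^ (m + 1) := by
  have hc : 0 < q ^ i / qnum q i := by positivity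
  have hbase : (1 - q) / (q ^ i / qnum q i) + 1 = (q ^ i)⁻¹ := by
    rw [div_div_eq_mul_div, one_sub_mul_qnum]
    field_simp
    ring
  simp only [qzetaTerm_eq_rpow_div hq0 hb, ← mul_div_assoc, ← sum_div]
  rw [sum_choose_mul_mul_rpow_sub hc, hbase, mul_comm _ s, Real.rpow_mul_natCast hc.le, div_pow,
    inv_pow]
  field_simp
  ring

theorem sum_choose_mul_qzeta_eq_tsum_pow (hq0 : 0 < q) (hq1 : q < 1) {s : ℝ} (hs : 1 < s) {k : ℕ}
    (hk : 1 ≤ k) :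
    ∑ j ∈ range k, ((k - 1).choose j : ℝ) * (1 - q) ^ j * qzeta q (k * s - j)
      = ∑' i : ℕ+, qzetaTerm q s i ^ k := by
  obtain ⟨m, rfl⟩ := Nat.exists_eq_add_of_le' hk
  have one_lt_weight (j : ℕ) (hj : j ∈ range (m + 1)) : 1 < ((m + 1 : ℕ) : ℝ) * s - j := by
    have : (j : ℝ) ≤ m := by exact_mod_cast Nat.lt_succ_iff.1 (mem_range.1 hj)
    push_cast
    nlinarith
  calc ∑ j ∈ range (m + 1), (m.choose j : ℝ) * (1 - q) ^ j * qzeta q ((m + 1 : ℕ) * s - j)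
      = ∑' i : ℕ+, ∑ j ∈ range (m + 1),
          (m.choose j : ℝ) * (1 - q) ^ j * qzetaTerm q ((m + 1 : ℕ) * s - j) i := by
        rw [Summable.tsum_finsetSum fun j hj =>
          (summable_qzetaTerm hq0 hq1 (one_lt_weight j hj)).mul_left _]
        exact sum_congr rfl fun j _ => tsum_mul_left.symm
    _ = ∑' i : ℕ+, qzetaTerm q s i ^ (m + 1) := tsum_congr fun i =>
        sum_choose_mul_qzetaTerm hq0 (zero_lt_one.trans_le (one_le_qnum hq0.le hq1 i.ne_zero)) s m

end QZeta

def strictAntiPosEquiv (n : ℕ) :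
    {f : Fin n → ℕ // StrictAnti f ∧ ∀ i, 0 < f i} ≃ (Fin n ↪o ℕ+) where
  toFun f := OrderEmbedding.ofStrictMono (fun i => ⟨f.1 i.rev, f.2.2 _⟩)
    fun _ _ h => f.2.1 (Fin.rev_lt_rev.2 h)
  invFun e := ⟨fun i => e i.rev, fun _ _ h => e.strictMono (Fin.rev_lt_rev.2 h),
    fun i => (e i.rev).pos⟩
  left_inv f := Subtype.ext <| funext fun i => congrArg f.1 i.rev_rev
  right_inv e := RelEmbedding.ext fun i => congrArg e i.rev_rev

theorem qzetaRep_eq_tsumEsymm (q s : ℝ) (n : ℕ) :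
    qzetaRep q s n = tsumEsymm (fun i : ℕ+ => qzetaTerm q s i) n := by
  rw [tsumEsymm_eq_tsum_orderEmbedding, qzetaRep, ← (strictAntiPosEquiv n).symm.tsum_eq]
  refine tsum_congr fun e => ?_
  exact Fintype.prod_equiv Fin.revPerm _ _ fun i => rfl

theorem qzeta_period_one_recurrence_general (q s : ℝ) (hq0 : 0 < q) (hq1 : q < 1)
    (hs : 1 < s) (n : ℕ) :
    (n : ℝ) * qzetaRep q s n
      = ∑ k ∈ Finset.Icc 1 n, (-1 : ℝ) ^ (k + 1) * qzetaRep q s (n - k) *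
          ∑ j ∈ Finset.range k,
            ((k - 1).choose j : ℝ) * (1 - q) ^ j * qzeta q ((k : ℝ) * s - (j : ℝ)) := by
  rw [qzetaRep_eq_tsumEsymm, mul_tsumEsymm (summable_qzetaTerm hq0 hq1 hs)]
  refine sum_congr rfl fun k hk => ?_
  rw [qzetaRep_eq_tsumEsymm, sum_choose_mul_qzeta_eq_tsum_pow hq0 hq1 hs (mem_Icc.1 hk).1]

theorem qzeta_period_one_recurrence (q s : ℝ) (hq0 : 0 < q) (hq1 : q < 1)
    (hs : 1 < s) (n : ℕ) (hn : 0 < n) :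
    (n : ℝ) * qzetaRep q s n
      = ∑ k ∈ Finset.Icc 1 n, (-1 : ℝ) ^ (k + 1) * qzetaRep q s (n - k) *
          ∑ j ∈ Finset.range k,
            ((k - 1).choose j : ℝ) * (1 - q) ^ j * qzeta q ((k : ℝ) * s - (j : ℝ)) :=
  qzeta_period_one_recurrence_general q s hq0 hq1 hs n
end

section
/- For every positive integer n and real s > 1, the ordinary multiple zeta value satisfies the Newton recurrence n\,\zeta(\{s\}^n) = \sum_{k=1}^n (-1)^{k+1} \zeta(\{s\}^{n-k}) \zeta(ks). -/
noncomputable def rzeta (s : ℝ) : ℝ := ∑' k : ℕ+, 1 / ((k : ℕ) : ℝ) ^ s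

noncomputable def mzvRep (s : ℝ) (n : ℕ) : ℝ :=
  ∑' k : {f : Fin n → ℕ // StrictAnti f ∧ ∀ i, 0 < f i},
    ∏ i, 1 / ((k.1 i : ℕ) : ℝ) ^ s

/-!
Restricted to finitely many indices `j`, `ζ({s}^m)` is the elementary symmetric polynomial
`e_m` in the numbers `j^{-s}` and `ζ(ks)` is the power sum `p_k`, so the recurrence is Newton's
identity `n e_n = ∑ (-1)^{k+1} e_{n-k} p_k`. Since `∑ j^{-s}` converges absolutely, so does the sum
of all finite products of the `j^{-s}`, and every truncated `e_m` and `p_k` converges to the full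
one; Newton's identity passes to the limit.
-/

open Finset Filter Topology

theorem Finset.mul_sum_powersetCard_prod_eq_sum {R ι : Type*} [CommRing R] (s : Finset ι)
    (f : ι → R) (n : ℕ) :
    n * ∑ t ∈ s.powersetCard n, ∏ i ∈ t, f i =
      ∑ k ∈ Icc 1 n, (-1) ^ (k + 1) * (∑ t ∈ s.powersetCard (n - k), ∏ i ∈ t, f i) *
        ∑ i ∈ s, f i ^ k := by
  classical
  have hesymm (m : ℕ) : MvPolynomial.aeval (fun i : s ↦ f i) (MvPolynomial.esymm s R m) =
      ∑ t ∈ s.powersetCard m, ∏ i ∈ t, f i := by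
    rw [MvPolynomial.aeval_esymm_eq_multiset_esymm, ← esymm_map_val]
    exact congrArg (Multiset.esymm · m) (Multiset.attach_map_val' _ f)
  have hpsum (k : ℕ) : MvPolynomial.aeval (fun i : s ↦ f i) (MvPolynomial.psum s R k) =
      ∑ i ∈ s, f i ^ k := by
    simp only [MvPolynomial.psum, map_sum, map_pow, MvPolynomial.aeval_X]
    exact sum_coe_sort s (f · ^ k)
  have h := congrArg (MvPolynomial.aeval (fun i : s ↦ f i)) (MvPolynomial.mul_esymm_eq_sum s R n)
  simp only [map_mul, map_natCast, map_sum, map_pow, map_neg, map_one, hesymm, hpsum] at h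
  rw [h, mul_sum]
  -- reindex the antidiagonal pairs `(n - k, k)` with `n - k < n` by `k`
  refine sum_nbij' Prod.snd (fun k ↦ (n - k, k)) ?_ ?_ ?_ (fun _ _ ↦ rfl) ?_ <;>
    simp only [mem_filter, HasAntidiagonal.mem_antidiagonal,
      mem_Icc, and_imp, Prod.forall, Prod.mk.injEq, and_true]
  · omega
  · omega
  · omega
  · intro i k hik hi
    rw [← mul_assoc, ← mul_assoc, ← pow_add, ← hik, Nat.add_sub_cancel,
      show i + k + 1 + i = 2 * i + (k + 1) by omega, pow_add, pow_mul, neg_one_sq, one_pow, one_mul]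

noncomputable def esymmTsum {ι R : Type*} [CommSemiring R] [TopologicalSpace R] (f : ι → R)
    (n : ℕ) : R :=
  ∑' t : Set.powersetCard ι n, ∏ i ∈ (t : Finset ι), f i

section esymmTsum

variable {ι R : Type*} [NormedCommRing R] [NormOneClass R] [CompleteSpace R] {f : ι → R}

theorem tendsto_sum_powersetCard_prod_esymmTsum (hf : Summable (‖f ·‖)) (n : ℕ) :
    Tendsto (fun s : Finset ι ↦ ∑ t ∈ s.powersetCard n, ∏ i ∈ t, f i) atTop
      (𝓝 (esymmTsum f n)) := by
  classical
  have hsum := ((summable_finsetProd_of_summable_norm hf).subtype (· ∈ Set.powersetCard ι n)).hasSum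
  refine ((hasSum_subtype_iff_indicator.1 hsum).comp tendsto_finset_powerset_atTop_atTop).congr
    fun s ↦ ?_
  simp [Set.indicator_apply, powersetCard_eq_filter, sum_filter]

theorem summable_pow_of_summable_norm (hf : Summable (‖f ·‖)) {k : ℕ} (hk : k ≠ 0) :
    Summable (f · ^ k) := by
  refine hf.of_norm_bounded_eventually ?_
  filter_upwards [hf.tendsto_cofinite_zero.eventually (Iic_mem_nhds zero_lt_one)] with i hi
  exact (norm_pow_le _ _).trans (pow_le_of_le_one (norm_nonneg _) hi hk)

theorem mul_esymmTsum_eq_sum (hf : Summable (‖f ·‖)) (n : ℕ) :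
    n * esymmTsum f n =
      ∑ k ∈ Icc 1 n, (-1) ^ (k + 1) * esymmTsum f (n - k) * ∑' i, f i ^ k := by
  have hrhs := tendsto_finsetSum (Icc 1 n) fun k hk ↦
    ((tendsto_sum_powersetCard_prod_esymmTsum hf (n - k)).const_mul ((-1) ^ (k + 1))).mul
      (summable_pow_of_summable_norm hf (Nat.one_le_iff_ne_zero.1 (mem_Icc.1 hk).1)).hasSum
  refine tendsto_nhds_unique ((tendsto_sum_powersetCard_prod_esymmTsum hf n).const_mul _) ?_
  simpa only [mul_sum_powersetCard_prod_eq_sum] using hrhs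

end esymmTsum

def strictAntiEquivOrderEmbedding (α : Type*) [LinearOrder α] (n : ℕ) :
    {f : Fin n → α // StrictAnti f} ≃ (Fin n ↪o α) where
  toFun f := OrderEmbedding.ofStrictMono (f.1 ∘ Fin.rev) (StrictAnti.comp f.2 Fin.rev_strictAnti)
  invFun g := ⟨g ∘ Fin.rev, g.strictMono.comp_strictAnti Fin.rev_strictAnti⟩
  left_inv f := by ext; simp
  right_inv g := by ext; simp

def strictAntiEquivPowersetCard (α : Type*) [LinearOrder α] (n : ℕ) :
    {f : Fin n → α // StrictAnti f} ≃ Set.powersetCard α n :=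
  (strictAntiEquivOrderEmbedding α n).trans Set.powersetCard.ofFinEmbEquiv

theorem prod_strictAntiEquivPowersetCard {α M : Type*} [LinearOrder α] [CommMonoid M] {n : ℕ}
    (g : α → M) (f : {f : Fin n → α // StrictAnti f}) :
    ∏ a ∈ (strictAntiEquivPowersetCard α n f : Finset α), g a = ∏ i, g (f.1 i) := by
  simp only [strictAntiEquivPowersetCard, Equiv.trans_apply, Set.powersetCard.ofFinEmbEquiv_apply,
    Set.powersetCard.val_ofFinEmb, prod_map]
  exact Equiv.prod_comp Fin.revPerm (g ∘ f.1)

def pnatStrictAntiEquiv (n : ℕ) :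
    {f : Fin n → ℕ // StrictAnti f ∧ ∀ i, 0 < f i} ≃ {g : Fin n → ℕ+ // StrictAnti g} where
  toFun f := ⟨fun i ↦ ⟨f.1 i, f.2.2 i⟩, fun _ _ h ↦ f.2.1 h⟩
  invFun g := ⟨fun i ↦ g.1 i, fun _ _ h ↦ g.2 h, fun i ↦ (g.1 i).pos⟩
  left_inv _ := rfl
  right_inv _ := rfl

theorem mzvRep_eq_esymmTsum (s : ℝ) (n : ℕ) :
    mzvRep s n = esymmTsum (fun j : ℕ+ ↦ 1 / ((j : ℕ) : ℝ) ^ s) n := by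
  rw [esymmTsum, ← ((pnatStrictAntiEquiv n).trans (strictAntiEquivPowersetCard ℕ+ n)).tsum_eq]
  simp only [Equiv.trans_apply, prod_strictAntiEquivPowersetCard]
  rfl

theorem rzeta_natCast_mul (s : ℝ) (k : ℕ) :
    rzeta (k * s) = ∑' j : ℕ+, (1 / ((j : ℕ) : ℝ) ^ s) ^ k := by
  refine tsum_congr fun j ↦ ?_
  rw [div_pow, one_pow, ← Real.rpow_natCast, ← Real.rpow_mul (Nat.cast_nonneg _), mul_comm]

theorem summable_norm_one_div_pnat_rpow {s : ℝ} (hs : 1 < s) :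
    Summable fun j : ℕ+ ↦ ‖1 / ((j : ℕ) : ℝ) ^ s‖ := by
  have := (Real.summable_one_div_nat_rpow.2 hs).comp_injective PNat.coe_injective
  simpa [Function.comp_def, abs_of_nonneg, Real.rpow_nonneg] using this

theorem mzv_newton_recurrence_general (s : ℝ) (hs : 1 < s) (n : ℕ) :
    (n : ℝ) * mzvRep s n
      = ∑ k ∈ Finset.Icc 1 n, (-1 : ℝ) ^ (k + 1) * mzvRep s (n - k) *
          rzeta ((k : ℝ) * s) := by
  simp only [mzvRep_eq_esymmTsum, rzeta_natCast_mul]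
  exact mul_esymmTsum_eq_sum (summable_norm_one_div_pnat_rpow hs) n

theorem mzv_newton_recurrence (s : ℝ) (hs : 1 < s) (n : ℕ) (hn : 0 < n) :
    (n : ℝ) * mzvRep s n
      = ∑ k ∈ Finset.Icc 1 n, (-1 : ℝ) ^ (k + 1) * mzvRep s (n - k) *
          rzeta ((k : ℝ) * s) :=
  mzv_newton_recurrence_general s hs n
end

section
/- Let 0 < q < 1 and let m be a nonnegative integer. Then 2\zeta[m+2,1] = (m+2)\zeta[m+3] + (1-q)\, m\, \zeta[m+2] - \sum_{k=2}^{m+1} \zeta[m+3-k]\,\zeta[k]. -/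
noncomputable def qz (q : ℝ) (s : ℕ) : ℝ :=
  ∑' k : ℕ+, q ^ ((s - 1) * (k : ℕ)) / (qnum q k) ^ s

noncomputable def qz1 (q : ℝ) (s : ℕ) : ℝ :=
  ∑' p : {p : ℕ × ℕ // p.2 < p.1 ∧ 0 < p.2},
    q ^ ((s - 1) * p.1.1) / ((qnum q p.1.1) ^ s * qnum q p.1.2)

/-!
The theorem combines two relations between the values `ζ[s]` and the double values `ζ[a, b]`.

Stuffle: splitting `ζ[a] ζ[b] = ∑_{j, k}` into `k < j`, `k > j` and `k = j` gives
`ζ[a, b] + ζ[b, a]` plus a diagonal sum, which `q^k + (1 - q) [k] = 1` turns into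
`ζ[a + b] + (1 - q) ζ[a + b - 1]`.

Sum formula `∑_{a + b = M + 2, a ≥ 2, b ≥ 1} ζ[a, b] = ζ[M + 2]`: for fixed `k₁ = k + d > k₂ = k`
the summands form a geometric progression in `a` with ratio `q^d [k] / [k + d]`, because
`[k + d] = [d] + q^d [k]`, so they telescope to two boundary terms. Summed over `d`, the first
boundary term telescopes again; summed over all pairs, the two differ exactly by the diagonal
`∑_k q^((M+1)k) / [k]^(M+2) = ζ[M + 2]`.

Summing the stuffle over `a + b = m + 3`, `a, b ≥ 2`, and inserting the sum formula for
`M = m + 1` gives the identity.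
-/

open Finset

section PNatSums

variable {α : Type*} [TopologicalSpace α]

theorem HasSum.pnat_add [AddCommGroup α] [IsTopologicalAddGroup α] {f : ℕ+ → α} {a : α}
    (hf : HasSum f a) (k : ℕ+) : HasSum (fun d => f (d + k)) (a - ∑ j ∈ Icc 1 k, f j) := by
  have hhead : HasSum (fun j => if k < j then 0 else f j) (∑ j ∈ Icc 1 k, f j) := by
    rw [← sum_congr rfl fun j hj => if_neg (not_lt.2 (mem_Icc.1 hj).2)]
    refine hasSum_sum_of_ne_finset_zero fun j hj => if_pos ?_
    simp only [mem_Icc, not_and, not_le] at hj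
    exact hj one_le
  have htail := hf.sub hhead
  rw [← (add_left_injective k).hasSum_iff fun j hj => ?_] at htail
  · convert htail using 2 with d
    simp [PNat.lt_add_left]
  · have hjk : ¬k < j := fun hlt => hj ⟨j - k, PNat.sub_add_of_lt hlt⟩
    simp [hjk]

theorem HasSum.sum_Ico_fiberwise [AddCommMonoid α] [ContinuousAdd α] [RegularSpace α]
    {F : ℕ+ × ℕ+ → α} {a : α} (hF : HasSum (fun p : ℕ+ × ℕ+ => F (p.1 + p.2, p.1)) a) :
    HasSum (fun j => ∑ k ∈ Ico 1 j, F (j, k)) a := by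
  have hinj : Function.Injective (fun p : ℕ+ × ℕ+ => (p.1 + p.2, p.1)) := by
    rintro ⟨k, d⟩ ⟨k', d'⟩ h
    simp only [Prod.mk.injEq] at h
    obtain ⟨h1, rfl⟩ := h
    simpa using h1
  have hF' : HasSum (fun x : ℕ+ × ℕ+ => if x.2 < x.1 then F x else 0) a := by
    refine (hinj.hasSum_iff fun x hx => if_neg fun hlt => hx ⟨(x.2, x.1 - x.2), ?_⟩).1 ?_
    · ext
      · simp [PNat.add_sub_of_lt hlt]
      · rfl
    · convert hF using 2 with p
      simp [PNat.lt_add_right]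
  refine hF'.prod_fiberwise fun j => ?_
  rw [← sum_congr rfl fun k hk => if_pos (mem_Ico.1 hk).2]
  refine hasSum_sum_of_ne_finset_zero fun k hk => if_neg ?_
  simp only [mem_Ico, not_and, not_lt] at hk
  exact not_lt.2 (hk one_le)

end PNatSums

namespace QEuler

variable {q : ℝ}

theorem qnum_nonneg (hq0 : 0 ≤ q) (hq1 : q < 1) (n : ℕ) : 0 ≤ qnum q n :=
  div_nonneg (sub_nonneg.2 (pow_le_one₀ hq0 hq1.le)) (sub_pos.2 hq1).le

theorem one_le_qnum (hq0 : 0 ≤ q) (hq1 : q < 1) {n : ℕ} (hn : n ≠ 0) : 1 ≤ qnum q n := by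
  rw [qnum, one_le_div (sub_pos.2 hq1)]
  linarith [pow_le_of_le_one hq0 hq1.le hn]

theorem qnum_ne_zero (hq0 : 0 ≤ q) (hq1 : q < 1) {n : ℕ} (hn : n ≠ 0) : qnum q n ≠ 0 :=
  (zero_lt_one.trans_le (one_le_qnum hq0 hq1 hn)).ne'

theorem qnum_add (q : ℝ) (a b : ℕ) : qnum q (a + b) = qnum q a + q ^ a * qnum q b := by
  simp only [qnum, pow_add]
  ring

theorem pow_add_one_sub_mul_qnum (hq1 : q ≠ 1) (n : ℕ) : q ^ n + (1 - q) * qnum q n = 1 := by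
  rw [qnum, mul_div_cancel₀ _ (sub_ne_zero.2 hq1.symm)]
  ring

noncomputable def qterm (q : ℝ) (s k : ℕ) : ℝ := q ^ ((s - 1) * k) / qnum q k ^ s

/-- `ζ[a, b]`, summed over `(k₂, k₁ - k₂) : ℕ+ × ℕ+` for `k₁ > k₂ > 0`. -/
noncomputable def qz2 (q : ℝ) (a b : ℕ) : ℝ :=
  ∑' p : ℕ+ × ℕ+, qterm q a (p.1 + p.2 : ℕ+) * qterm q b p.1

def pnatProdEquivLt : ℕ+ × ℕ+ ≃ {p : ℕ × ℕ // p.2 < p.1 ∧ 0 < p.2} where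
  toFun p := ⟨(p.1 + p.2, p.1), by simp, p.1.pos⟩
  invFun p := (⟨p.1.2, p.2.2⟩, ⟨p.1.1 - p.1.2, Nat.sub_pos_of_lt p.2.1⟩)
  left_inv p := Prod.ext rfl (PNat.eq (by simp))
  right_inv p := by ext <;> simp [Nat.add_sub_of_le p.2.1.le]

theorem qz1_eq_qz2 (q : ℝ) (s : ℕ) : qz1 q s = qz2 q s 1 := by
  rw [qz1, qz2, ← pnatProdEquivLt.tsum_eq]
  refine tsum_congr fun p => ?_
  simp only [pnatProdEquivLt, Equiv.coe_fn_mk, qterm, PNat.add_coe, Nat.sub_self, zero_mul,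
    pow_zero, pow_one]
  ring

theorem qterm_nonneg (hq0 : 0 ≤ q) (hq1 : q < 1) (s k : ℕ) : 0 ≤ qterm q s k :=
  div_nonneg (pow_nonneg hq0 _) (pow_nonneg (qnum_nonneg hq0 hq1 k) _)

theorem qterm_le (hq0 : 0 ≤ q) (hq1 : q < 1) (s : ℕ) {k : ℕ} (hk : k ≠ 0) :
    qterm q s k ≤ q ^ ((s - 1) * k) :=
  div_le_self (pow_nonneg hq0 _) (one_le_pow₀ (one_le_qnum hq0 hq1 hk))

theorem qterm_le_one (hq0 : 0 ≤ q) (hq1 : q < 1) (s : ℕ) {k : ℕ} (hk : k ≠ 0) :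
    qterm q s k ≤ 1 :=
  (qterm_le hq0 hq1 s hk).trans (pow_le_one₀ hq0 hq1.le)

theorem qterm_le_pow (hq0 : 0 ≤ q) (hq1 : q < 1) {s : ℕ} (hs : 2 ≤ s) {k : ℕ} (hk : k ≠ 0) :
    qterm q s k ≤ q ^ k :=
  (qterm_le hq0 hq1 s hk).trans
    (pow_le_pow_of_le_one hq0 hq1.le (Nat.le_mul_of_pos_left k (by omega)))

theorem summable_of_le_pow (hq0 : 0 ≤ q) (hq1 : q < 1) {f : ℕ+ → ℝ} (h0 : ∀ k, 0 ≤ f k)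
    (hle : ∀ k, f k ≤ q ^ (k : ℕ)) : Summable f :=
  .of_nonneg_of_le h0 hle
    ((summable_geometric_of_lt_one hq0 hq1).comp_injective PNat.coe_injective)

theorem summable_prod_of_le_pow (hq0 : 0 ≤ q) (hq1 : q < 1) {F : ℕ+ × ℕ+ → ℝ}
    (h0 : ∀ p, 0 ≤ F p) (hle : ∀ p, F p ≤ q ^ ((p.1 : ℕ) + p.2)) : Summable F := by
  have hgeom := summable_of_le_pow hq0 hq1 (f := fun k => q ^ (k : ℕ)) (fun k => by positivity)
    fun k => le_rfl
  refine .of_nonneg_of_le h0 (fun p => (hle p).trans_eq (pow_add q _ _)) ?_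
  exact hgeom.mul_of_nonneg hgeom (fun k => by positivity) fun k => by positivity

theorem hasSum_qz (hq0 : 0 ≤ q) (hq1 : q < 1) {s : ℕ} (hs : 2 ≤ s) :
    HasSum (fun k : ℕ+ => qterm q s k) (qz q s) :=
  (summable_of_le_pow hq0 hq1 (fun k => qterm_nonneg hq0 hq1 s k)
    fun k => qterm_le_pow hq0 hq1 hs k.ne_zero).hasSum

theorem summable_qz2 (hq0 : 0 ≤ q) (hq1 : q < 1) {a : ℕ} (ha : 2 ≤ a) (b : ℕ) :
    Summable fun p : ℕ+ × ℕ+ => qterm q a (p.1 + p.2 : ℕ+) * qterm q b p.1 := by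
  refine summable_prod_of_le_pow hq0 hq1
    (fun p => mul_nonneg (qterm_nonneg hq0 hq1 _ _) (qterm_nonneg hq0 hq1 _ _)) fun p => ?_
  simpa using mul_le_mul (qterm_le_pow hq0 hq1 ha (p.1 + p.2).ne_zero)
    (qterm_le_one hq0 hq1 b p.1.ne_zero) (qterm_nonneg hq0 hq1 _ _) (by positivity)

theorem qterm_mul_qterm_self (hq1 : q ≠ 1) {a b k : ℕ} (ha : a ≠ 0) (hb : b ≠ 0)
    (hk : qnum q k ≠ 0) :
    qterm q a k * qterm q b k = qterm q (a + b) k + (1 - q) * qterm q (a + b - 1) k := by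
  obtain ⟨e, he⟩ : ∃ e, a + b = e + 2 := ⟨a + b - 2, by omega⟩
  have hexp : (a - 1) * k + (b - 1) * k = e * k := by rw [← add_mul]; congr 1; omega
  rw [qterm, qterm, div_mul_div_comm, ← pow_add, ← pow_add, hexp, he, qterm, qterm,
    show e + 2 - 1 = e + 1 by omega, show e + 1 - 1 = e by omega, add_mul, one_mul]
  field_simp
  linear_combination -(q ^ (e * k) * qnum q k ^ (e + 1)) * pow_add_one_sub_mul_qnum hq1 k

theorem qz_mul_qz (hq0 : 0 ≤ q) (hq1 : q < 1) {a b : ℕ} (ha : 2 ≤ a) (hb : 2 ≤ b) :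
    qz q a * qz q b = qz2 q a b + qz2 q b a + (qz q (a + b) + (1 - q) * qz q (a + b - 1)) := by
  have hlower : HasSum (fun j : ℕ+ => ∑ k ∈ Ico 1 j, qterm q a j * qterm q b k) (qz2 q a b) :=
    (summable_qz2 hq0 hq1 ha b).hasSum.sum_Ico_fiberwise
      (F := fun x => qterm q a x.1 * qterm q b x.2)
  have hupper : HasSum (fun j : ℕ+ => qterm q a j * (qz q b - ∑ k ∈ Icc 1 j, qterm q b k))
      (qz2 q b a) := by
    refine (summable_qz2 hq0 hq1 hb a).hasSum.prod_fiberwise fun j => ?_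
    simpa only [mul_comm, add_comm] using
      ((hasSum_qz hq0 hq1 hb).pnat_add j).mul_left (qterm q a j)
  have hdiag : HasSum (fun j : ℕ+ => qterm q a j * qterm q b j)
      (qz q (a + b) + (1 - q) * qz q (a + b - 1)) := by
    refine ((hasSum_qz hq0 hq1 (by omega : 2 ≤ a + b)).add
      ((hasSum_qz hq0 hq1 (by omega : 2 ≤ a + b - 1)).mul_left (1 - q))).congr_fun fun j => ?_
    exact qterm_mul_qterm_self hq1.ne (by omega) (by omega) (qnum_ne_zero hq0 hq1 j.ne_zero)
  refine ((hasSum_qz hq0 hq1 ha).mul_right (qz q b)).unique ?_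
  refine ((hlower.add hupper).add hdiag).congr_fun fun j => ?_
  rw [← Ico_insert_right (one_le : 1 ≤ j), sum_insert (by simp), ← mul_sum]
  ring

/-- Consecutive terms of `j ↦ qterm q (j + 2) (k + d) * qterm q (M - j) k` have ratio
`q^d [k] / [k + d]`; `qtel` is the antidifference of this geometric progression. -/
noncomputable def qtel (q : ℝ) (M k d j : ℕ) : ℝ :=
  q ^ (M * k + (j + 1) * d) / (qnum q k ^ (M - j) * qnum q d * qnum q (k + d) ^ (j + 1))

theorem qterm_mul_qterm_eq_qtel_sub {M k d j : ℕ} (hk : qnum q k ≠ 0) (hd : qnum q d ≠ 0)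
    (hkd : qnum q (k + d) ≠ 0) (hj : j < M) :
    qterm q (j + 2) (k + d) * qterm q (M - j) k = qtel q M k d j - qtel q M k d (j + 1) := by
  obtain ⟨b, rfl⟩ : ∃ b, M = j + 1 + b := ⟨M - (j + 1), by omega⟩
  have hrel : qnum q (k + d) = qnum q d + q ^ d * qnum q k := by rw [add_comm, qnum_add]
  rw [qterm, qterm, qtel, qtel, show j + 1 + b - j = b + 1 by omega,
    show j + 1 + b - (j + 1) = b by omega, show j + 2 - 1 = j + 1 by omega, Nat.add_sub_cancel]
  field_simp
  linear_combination -(q ^ ((j + 1 + b) * k + (j + 1) * d) * qnum q k ^ b *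
    qnum q (k + d) ^ (j + 1)) * hrel

theorem qtel_zero (q : ℝ) (M : ℕ) {k d : ℕ} (hk : qnum q k ≠ 0) (hd : qnum q d ≠ 0)
    (hkd : qnum q (k + d) ≠ 0) :
    qtel q M k d 0 = qterm q (M + 1) k * (q ^ d / qnum q d - q ^ (k + d) / qnum q (k + d)) := by
  have hrel := qnum_add q k d
  rw [qtel, qterm, Nat.add_sub_cancel, Nat.sub_zero]
  field_simp
  linear_combination -(q ^ (M * k) * q ^ d * qnum q k ^ M * qnum q (k + d)) * hrel

theorem qtel_self (q : ℝ) (M k d : ℕ) :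
    qtel q M k d M = qterm q (M + 1) (k + d) * (q ^ d / qnum q d) := by
  rw [qtel, qterm, Nat.sub_self, pow_zero, one_mul, Nat.add_sub_cancel, div_mul_div_comm,
    ← pow_add, mul_comm (qnum q d)]
  ring_nf

theorem qtel_nonneg (hq0 : 0 ≤ q) (hq1 : q < 1) (M k d j : ℕ) : 0 ≤ qtel q M k d j := by
  have hnum := qnum_nonneg hq0 hq1
  exact div_nonneg (pow_nonneg hq0 _)
    (mul_nonneg (mul_nonneg (pow_nonneg (hnum k) _) (hnum d)) (pow_nonneg (hnum _) _))

theorem qtel_le (hq0 : 0 ≤ q) (hq1 : q < 1) {M : ℕ} (hM : M ≠ 0) {k d : ℕ} (hk : k ≠ 0)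
    (hd : d ≠ 0) (j : ℕ) : qtel q M k d j ≤ q ^ (k + d) := by
  have hden : 1 ≤ qnum q k ^ (M - j) * qnum q d * qnum q (k + d) ^ (j + 1) := by
    refine one_le_mul_of_one_le_of_one_le (one_le_mul_of_one_le_of_one_le ?_ ?_) ?_
    · exact one_le_pow₀ (one_le_qnum hq0 hq1 hk)
    · exact one_le_qnum hq0 hq1 hd
    · exact one_le_pow₀ (one_le_qnum hq0 hq1 (by omega))
  refine (div_le_self (pow_nonneg hq0 _) hden).trans (pow_le_pow_of_le_one hq0 hq1.le ?_)
  gcongr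
  · exact Nat.le_mul_of_pos_left k (by omega)
  · exact Nat.le_mul_of_pos_left d (by omega)

theorem summable_qtel (hq0 : 0 ≤ q) (hq1 : q < 1) {M : ℕ} (hM : M ≠ 0) (j : ℕ) :
    Summable fun p : ℕ+ × ℕ+ => qtel q M p.1 p.2 j :=
  summable_prod_of_le_pow hq0 hq1 (fun p => qtel_nonneg hq0 hq1 M p.1 p.2 j)
    fun p => qtel_le hq0 hq1 hM p.1.ne_zero p.2.ne_zero j

theorem qterm_mul_pow_div_qnum (q : ℝ) (s k : ℕ) :
    qterm q (s + 1) k * (q ^ k / qnum q k) = qterm q (s + 2) k := by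
  rw [qterm, qterm, div_mul_div_comm, ← pow_add, ← pow_succ]
  congr 2
  simp only [Nat.add_sub_cancel, show s + 2 - 1 = s + 1 by omega]
  ring

theorem sum_range_qz2_eq_qz (hq0 : 0 ≤ q) (hq1 : q < 1) {M : ℕ} (hM : M ≠ 0) :
    ∑ j ∈ range M, qz2 q (j + 2) (M - j) = qz q (M + 2) := by
  set u : ℕ+ → ℝ := fun n => q ^ (n : ℕ) / qnum q n
  have hu : HasSum u (∑' n, u n) :=
    (summable_of_le_pow hq0 hq1 (fun n => div_nonneg (pow_nonneg hq0 _) (qnum_nonneg hq0 hq1 _))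
      fun n => div_le_self (pow_nonneg hq0 _) (one_le_qnum hq0 hq1 n.ne_zero)).hasSum
  have hne : ∀ n : ℕ+, qnum q n ≠ 0 := fun n => qnum_ne_zero hq0 hq1 n.ne_zero
  have hT := summable_qtel hq0 hq1 hM
  have htel : HasSum (fun p : ℕ+ × ℕ+ => qtel q M p.1 p.2 0 - qtel q M p.1 p.2 M)
      (∑ j ∈ range M, qz2 q (j + 2) (M - j)) := by
    refine (hasSum_sum fun j _ => (summable_qz2 hq0 hq1 (by omega) _).hasSum).congr_fun
      fun p => ?_
    rw [← sum_range_sub']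
    exact sum_congr rfl fun j hj =>
      (qterm_mul_qterm_eq_qtel_sub (hne _) (hne _) (hne (p.1 + p.2)) (mem_range.1 hj)).symm
  have hlow : HasSum (fun k : ℕ+ => qterm q (M + 1) k * ∑ n ∈ Icc 1 k, u n)
      (∑' p : ℕ+ × ℕ+, qtel q M p.1 p.2 0) := by
    refine (hT 0).hasSum.prod_fiberwise fun k => ?_
    have hfiber := (hu.sub (hu.pnat_add k)).mul_left (qterm q (M + 1) k)
    rw [sub_sub_cancel] at hfiber
    refine hfiber.congr_fun fun d => ?_
    rw [qtel_zero q M (hne k) (hne d) (hne (k + d))]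
    simp only [u, PNat.add_coe, add_comm (d : ℕ)]
  have hhigh : HasSum (fun j : ℕ+ => ∑ n ∈ Ico 1 j, qterm q (M + 1) j * u n)
      (∑' p : ℕ+ × ℕ+, qtel q M p.1 p.2 M) := by
    refine HasSum.sum_Ico_fiberwise (F := fun x => qterm q (M + 1) x.1 * u x.2) ?_
    refine ((Equiv.prodComm ℕ+ ℕ+).hasSum_iff.2 (hT M).hasSum).congr_fun fun p => ?_
    simp only [Function.comp_apply, Equiv.prodComm_apply, Prod.fst_swap, Prod.snd_swap, qtel_self,
      u, PNat.add_coe, add_comm (p.2 : ℕ)]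
  have hdiff : HasSum (fun k : ℕ+ => qterm q (M + 2) k)
      (∑' p : ℕ+ × ℕ+, qtel q M p.1 p.2 0 - ∑' p : ℕ+ × ℕ+, qtel q M p.1 p.2 M) := by
    refine (hlow.sub hhigh).congr_fun fun k => ?_
    rw [← Ico_insert_right (one_le : 1 ≤ k), sum_insert (by simp), ← mul_sum, mul_add,
      add_sub_cancel_right]
    exact (qterm_mul_pow_div_qnum q M k).symm
  rw [htel.unique ((hT 0).hasSum.sub (hT M).hasSum), (hasSum_qz hq0 hq1 (by omega)).unique hdiff]

end QEuler

open QEuler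

theorem q_euler_convolution (q : ℝ) (hq0 : 0 < q) (hq1 : q < 1) (m : ℕ) :
    2 * qz1 q (m + 2)
      = (m + 2 : ℝ) * qz q (m + 3) + (1 - q) * (m : ℝ) * qz q (m + 2)
        - ∑ k ∈ Finset.Icc 2 (m + 1), qz q (m + 3 - k) * qz q k := by
  have hsum := sum_range_qz2_eq_qz hq0.le hq1 (M := m + 1) (by omega)
  rw [sum_range_succ, Nat.add_sub_cancel_left] at hsum
  have hprod : ∑ k ∈ Icc 2 (m + 1), qz q (m + 3 - k) * qz q k = ∑ j ∈ range m,
      (qz2 q (m + 1 - j) (j + 2) + qz2 q (j + 2) (m + 1 - j)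
        + (qz q (m + 3) + (1 - q) * qz q (m + 2))) := by
    rw [← Ico_add_one_right_eq_Icc, sum_Ico_eq_sum_range, show m + 1 + 1 - 2 = m by omega]
    refine sum_congr rfl fun j hj => ?_
    have hjm := mem_range.1 hj
    rw [show m + 3 - (2 + j) = m + 1 - j by omega, add_comm 2 j,
      qz_mul_qz hq0.le hq1 (by omega) (by omega), show m + 1 - j + (j + 2) = m + 3 by omega,
      show m + 3 - 1 = m + 2 from rfl]
  have hreflect : ∑ j ∈ range m, qz2 q (m + 1 - j) (j + 2)
      = ∑ j ∈ range m, qz2 q (j + 2) (m + 1 - j) := by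
    rw [← sum_range_reflect]
    refine sum_congr rfl fun j hj => ?_
    have hjm := mem_range.1 hj
    rw [show m + 1 - (m - 1 - j) = j + 2 by omega, show m - 1 - j + 2 = m + 1 - j by omega]
  rw [qz1_eq_qz2, hprod, sum_add_distrib, sum_add_distrib, hreflect, sum_const, card_range,
    nsmul_eq_mul]
  linear_combination 2 * hsum
end

section
/- Let 0 < q < 1, let a > 0 be an integer and m > 1 an integer, and let \theta be real with \theta' := q\theta - 1. Then (\theta q^{2m})/([m]_q^a([m]_q - \theta q^m)) - q^m/([m]_q^{a-1}([m]_q - \theta q^m)) = (\theta' q^{2m-a})/([m-1]_q^a([m]_q - \theta q^m)) - q^{m-a+1}/([m-1]_q^{a-1}([m]_q - \theta q^m)) + q^{m-a+1}/[m-1]_q^a - q^m/[m]_q^a, provided [m]_q - \theta q^m \ne 0. -/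
/-!
Write `D = [m]_q - θ q^m`. Collecting the two fractions with denominator `D` on each side, the
numerators become multiples of `D`: on the left `θ q^{2m} - q^m [m]_q = -q^m D`, and on the right
`θ' q^{m-1} - [m-1]_q = -D` because `[m]_q = [m-1]_q + q^{m-1}`. So the left side is
`-q^m / [m]_q^a`, the first two terms on the right cancel the third, and the identity follows.
-/

lemma qnum_pos {q : ℝ} (hq0 : 0 ≤ q) (hq1 : q < 1) {k : ℕ} (hk : k ≠ 0) : 0 < qnum q k :=
  div_pos (sub_pos.2 (pow_lt_one₀ hq0 hq1 hk)) (sub_pos.2 hq1)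

lemma qnum_succ {q : ℝ} (hq : q ≠ 1) (k : ℕ) : qnum q (k + 1) = qnum q k + q ^ k := by
  have : 1 - q ≠ 0 := sub_ne_zero.2 hq.symm
  unfold qnum
  field_simp
  ring

lemma div_pow_mul_sub_div_pow_pred_mul {K : Type*} [Field K] {x : K} (hx : x ≠ 0) {a : ℕ}
    (ha : 0 < a) (u v y : K) :
    u / (x ^ a * y) - v / (x ^ (a - 1) * y) = (u - v * x) / (x ^ a * y) := by
  obtain ⟨b, rfl⟩ : ∃ b, a = b + 1 := ⟨a - 1, by omega⟩
  rw [Nat.add_sub_cancel, pow_succ, sub_div, mul_right_comm, mul_div_mul_right _ _ hx]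

theorem q_partial_fraction_identity (q θ : ℝ) (hq0 : 0 < q) (hq1 : q < 1)
    (a m : ℕ) (ha : 0 < a) (hm : 1 < m)
    (hden : qnum q m - θ * q ^ (m : ℤ) ≠ 0) :
    θ * q ^ (2 * (m : ℤ)) / ((qnum q m) ^ a * (qnum q m - θ * q ^ (m : ℤ)))
      - q ^ (m : ℤ) / ((qnum q m) ^ (a - 1) * (qnum q m - θ * q ^ (m : ℤ)))
    = (q * θ - 1) * q ^ (2 * (m : ℤ) - (a : ℤ)) /
        ((qnum q (m - 1)) ^ a * (qnum q m - θ * q ^ (m : ℤ)))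
      - q ^ ((m : ℤ) - (a : ℤ) + 1) /
          ((qnum q (m - 1)) ^ (a - 1) * (qnum q m - θ * q ^ (m : ℤ)))
      + q ^ ((m : ℤ) - (a : ℤ) + 1) / (qnum q (m - 1)) ^ a
      - q ^ (m : ℤ) / (qnum q m) ^ a := by
  obtain ⟨n, rfl⟩ : ∃ n, m = n + 1 := ⟨m - 1, by omega⟩
  set D := qnum q (n + 1) - θ * q ^ ((n + 1 : ℕ) : ℤ)
  have hq : q ≠ 0 := hq0.ne'
  have hA : qnum q (n + 1) ≠ 0 := (qnum_pos hq0.le hq1 n.succ_ne_zero).ne'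
  have hB : qnum q n ≠ 0 := (qnum_pos hq0.le hq1 (by omega)).ne'
  have hshift : (q * θ - 1) * q ^ n - qnum q n = -D := by
    simp only [D, qnum_succ hq1.ne, zpow_natCast, pow_succ]
    ring
  have hlhs : θ * q ^ (2 * ((n + 1 : ℕ) : ℤ)) - q ^ ((n + 1 : ℕ) : ℤ) * qnum q (n + 1)
      = -(q ^ ((n + 1 : ℕ) : ℤ) * D) := by
    rw [mul_comm 2, zpow_mul, zpow_two]
    ring
  have hrhs : (q * θ - 1) * q ^ (2 * ((n + 1 : ℕ) : ℤ) - a)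
      - q ^ (((n + 1 : ℕ) : ℤ) - a + 1) * qnum q n
      = -(q ^ (((n + 1 : ℕ) : ℤ) - a + 1) * D) := by
    rw [← mul_neg, ← hshift, show 2 * ((n + 1 : ℕ) : ℤ) - a = ((n + 1 : ℕ) : ℤ) - a + 1 + n by push_cast; ring,
      zpow_add₀ hq, zpow_natCast]
    ring
  rw [Nat.add_sub_cancel, div_pow_mul_sub_div_pow_pred_mul hA ha,
    div_pow_mul_sub_div_pow_pred_mul hB ha, hlhs, hrhs, neg_div, neg_div,
    mul_div_mul_right _ _ hden, mul_div_mul_right _ _ hden]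
  ring
end
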